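/- arXiv:1109.3003 — 6 statements merged into one kernel-verified Lean document; each statement's English description precedes it below -/
import Mathlib

section
/- Let V be the vector space over a field k with countable basis (e_n)_{n∈ℕ}. Let e_n* ∈ V* be the coordinate functionals and f* ∈ V* the functional with f*(e_n) = 1 for all n. Set H = span{e_n* : n ∈ ℕ} and L = span{f*, e_n* : n ≥ 1}. Then H^⊥ = 0, L^⊥ = 0, and (H ∩ L)^⊥ = span{e_0}; in particular H^⊥ + L^⊥ ≠ (H ∩ L)^⊥. -/
section Aux
variable {k : Type*} [Field k]

/-- Any element of the span of coordinate functionals vanishes on all but finitely many `e m`. -/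
lemma aux_fin (g : Module.Dual k (ℕ →₀ k))
    (hg : g ∈ Submodule.span k (Set.range (fun n => (Finsupp.lapply n : Module.Dual k (ℕ →₀ k))))) :
    ∃ s : Finset ℕ, ∀ m ∉ s, g (Finsupp.single m 1) = 0 := by
  induction hg using Submodule.span_induction with
  | mem x hx =>
    obtain ⟨n, rfl⟩ := hx
    refine ⟨{n}, fun m hm => ?_⟩
    have hmn : ¬ (m = n) := Finset.notMem_singleton.mp hm
    simp [Finsupp.lapply, Finsupp.single_apply, hmn]
  | zero => exact ⟨∅, fun m _ => rfl⟩
  | add a b _ _ ha hb =>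
    obtain ⟨s₁, h₁⟩ := ha; obtain ⟨s₂, h₂⟩ := hb
    exact ⟨s₁ ∪ s₂, fun m hm => by
      simp [h₁ m (fun h => hm (Finset.mem_union_left _ h)),
        h₂ m (fun h => hm (Finset.mem_union_right _ h))]⟩
  | smul c a _ ha =>
    obtain ⟨s, hs⟩ := ha
    exact ⟨s, fun m hm => by simp [hs m hm]⟩

lemma aux_e0 (g : Module.Dual k (ℕ →₀ k))
    (hg : g ∈ Submodule.span k {h : Module.Dual k (ℕ →₀ k) |
        ∃ n, 1 ≤ n ∧ h = Finsupp.lapply n}) :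
    g (Finsupp.single 0 1) = 0 := by
  induction hg using Submodule.span_induction with
  | mem x hx =>
    obtain ⟨n, hn, rfl⟩ := hx
    have h0n : ¬ ((0 : ℕ) = n) := by omega
    simp [Finsupp.lapply, Finsupp.single_apply, h0n]
  | zero => rfl
  | add a b _ _ ha hb => simp [ha, hb]
  | smul c a _ ha => simp [ha]

end Aux

/-- Orthogonal in `V` of a subspace `Y ≤ V*`. -/
def dPerp {k : Type*} [Field k] {V : Type*} [AddCommGroup V] [Module k V]
    (Y : Submodule k (Module.Dual k V)) : Submodule k V where
  carrier := {v | ∀ g ∈ Y, g v = 0}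
  add_mem' := by intro v w hv hw g hg; simp [hv g hg, hw g hg]
  zero_mem' := by intro g hg; simp
  smul_mem' := by intro c v hv g hg; simp [hv g hg]

/-- In `V = ⊕_{n∈ℕ} k`, with `H = span{eₙ* : n ∈ ℕ}` and `L = span{f*, eₙ* : n ≥ 1}`,
we have `H^⊥ = 0`, `L^⊥ = 0`, `(H ∩ L)^⊥ = span{e₀}`, and `H^⊥ + L^⊥ ≠ (H ∩ L)^⊥`. -/
theorem stmt8 {k : Type*} [Field k] :
    let V := ℕ →₀ k
    let e : ℕ → V := fun n => Finsupp.single n 1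
    let estar : ℕ → Module.Dual k V := fun n => Finsupp.lapply n
    let fstar : Module.Dual k V := Finsupp.linearCombination k (fun _ => (1 : k))
    let H : Submodule k (Module.Dual k V) := Submodule.span k (Set.range estar)
    let L : Submodule k (Module.Dual k V) :=
      Submodule.span k ({fstar} ∪ {g | ∃ n, 1 ≤ n ∧ g = estar n})
    dPerp H = ⊥ ∧
    dPerp L = ⊥ ∧
    dPerp (H ⊓ L) = Submodule.span k {e 0} ∧
    dPerp H ⊔ dPerp L ≠ dPerp (H ⊓ L) := by
  intro V e estar fstar H L
  have hestarH : ∀ n, estar n ∈ H := fun n =>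
    Submodule.subset_span (Set.mem_range_self n)
  have hSsub : {g : Module.Dual k V | ∃ n, 1 ≤ n ∧ g = estar n} ⊆ Set.range estar := by
    rintro g ⟨n, _, rfl⟩; exact Set.mem_range_self n
  -- Part 1
  have h1 : dPerp H = ⊥ := by
    rw [eq_bot_iff]
    intro v hv
    have : ∀ n, v n = 0 := fun n => hv (estar n) (hestarH n)
    exact (Submodule.mem_bot k).2 (Finsupp.ext this)
  -- Part 2
  have h2 : dPerp L = ⊥ := by
    rw [eq_bot_iff]
    intro v hv
    have hvn : ∀ n, 1 ≤ n → v n = 0 := fun n hn =>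
      hv (estar n) (Submodule.subset_span (Or.inr ⟨n, hn, rfl⟩))
    have hv0 : v = Finsupp.single 0 (v 0) := by
      ext n
      rcases Nat.eq_zero_or_pos n with rfl | hn
      · simp
      · have h0n : ¬ ((0 : ℕ) = n) := by omega
        simp [hvn n hn, Finsupp.single_apply, h0n]
    have hf : fstar v = 0 := hv fstar (Submodule.subset_span (Or.inl rfl))
    have hfv : fstar v = v 0 := by
      conv_lhs => rw [hv0]
      show Finsupp.linearCombination k (fun _ => (1 : k)) (Finsupp.single 0 (v 0)) = v 0
      rw [Finsupp.linearCombination_single]; simp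
    have hv00 : v 0 = 0 := by rw [← hfv, hf]
    refine (Submodule.mem_bot k).2 (Finsupp.ext fun n => ?_)
    rcases Nat.eq_zero_or_pos n with rfl | hn
    · exact hv00
    · exact hvn n hn
  -- Part 3
  have h3 : dPerp (H ⊓ L) = Submodule.span k {e 0} := by
    apply le_antisymm
    · intro v hv
      have hvn : ∀ n, 1 ≤ n → v n = 0 := fun n hn =>
        hv (estar n) (Submodule.mem_inf.2
          ⟨hestarH n, Submodule.subset_span (Or.inr ⟨n, hn, rfl⟩)⟩)
      have hv0 : v = Finsupp.single 0 (v 0) := by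
        ext n
        rcases Nat.eq_zero_or_pos n with rfl | hn
        · simp
        · have h0n : ¬ ((0 : ℕ) = n) := by omega
          simp [hvn n hn, Finsupp.single_apply, h0n]
      have hse : v 0 • e 0 = Finsupp.single 0 (v 0) := by
        show v 0 • Finsupp.single 0 (1 : k) = Finsupp.single 0 (v 0)
        rw [Finsupp.smul_single]; simp
      exact Submodule.mem_span_singleton.2 ⟨v 0, hse.trans hv0.symm⟩
    · rw [Submodule.span_le, Set.singleton_subset_iff]
      intro g hg
      obtain ⟨hgH, hgL⟩ := Submodule.mem_inf.1 hg
      have hgL2 : g ∈ Submodule.span k (({fstar} : Set (Module.Dual k V)) ∪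
          {g | ∃ n, 1 ≤ n ∧ g = estar n}) := hgL
      rw [Submodule.span_union, Submodule.mem_sup] at hgL2
      obtain ⟨a, ha, b, hb, hab⟩ := hgL2
      rw [Submodule.mem_span_singleton] at ha
      obtain ⟨c, rfl⟩ := ha
      obtain ⟨s₁, hs₁⟩ := aux_fin _ hgH
      obtain ⟨s₂, hs₂⟩ := aux_fin b (Submodule.span_mono hSsub hb)
      obtain ⟨m, hm⟩ := Infinite.exists_notMem_finset (s₁ ∪ s₂)
      have hc : c = 0 := by
        have h0 := hs₁ m (fun h => hm (Finset.mem_union_left _ h))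
        have hbm := hs₂ m (fun h => hm (Finset.mem_union_right _ h))
        have hfm : fstar (Finsupp.single m 1) = 1 := by
          show Finsupp.linearCombination k (fun _ => (1 : k)) (Finsupp.single m 1) = 1
          rw [Finsupp.linearCombination_single]; simp
        rw [← hab] at h0
        simpa [hbm, hfm] using h0
      have hb0 : b (e 0) = 0 := aux_e0 b hb
      rw [← hab]
      simp [hc, hb0, e]
  -- Part 4
  refine ⟨h1, h2, h3, ?_⟩
  rw [h1, h2, h3, sup_idem]
  intro h
  have he : e 0 ∈ (⊥ : Submodule k V) := h ▸ Submodule.mem_span_singleton_self (e 0)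
  have he0 : e 0 = 0 := (Submodule.mem_bot k).1 he
  exact one_ne_zero (Finsupp.single_eq_zero.mp he0)
end

section
/- Let V be the vector space over a field k with countable basis (e_n)_{n∈ℕ}. For p ∈ ℕ define H_p = span{e_n* + e_{n+1}* + ⋯ + e_{n+p}* : n ∈ ℕ} ≤ V*. Then H_p^⊥ = 0 for every p, yet ⋂_{p∈ℕ} H_p = 0. -/
lemma window_sum {k : Type*} [Field k] (m n p : ℕ) :
    (∑ i ∈ Finset.range (p+1), if m = n + i then (1:k) else 0)
      = if n ≤ m ∧ m ≤ n + p then 1 else 0 := by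
  by_cases h : n ≤ m ∧ m ≤ n + p
  · rw [if_pos h, Finset.sum_eq_single (m - n)]
    · rw [if_pos (by omega)]
    · intro i hi hne; rw [if_neg]; simp only [Finset.mem_range] at hi; omega
    · intro hmem; simp only [Finset.mem_range] at hmem; omega
  · rw [if_neg h]
    apply Finset.sum_eq_zero
    intro i hi; rw [if_neg]; simp only [Finset.mem_range] at hi; omega

/-- In `V = ⊕_{n∈ℕ} k`, let `H_p = span{eₙ* + e_{n+1}* + ⋯ + e_{n+p}* : n ∈ ℕ} ≤ V*`.
Then `H_p^⊥ = 0` for every `p`, yet `⋂_p H_p = 0`. -/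
theorem stmt9 {k : Type*} [Field k] :
    let V := ℕ →₀ k
    let estar : ℕ → Module.Dual k V := fun n => Finsupp.lapply n
    let H : ℕ → Submodule k (Module.Dual k V) := fun p =>
      Submodule.span k {g | ∃ n, g = ∑ i ∈ Finset.range (p + 1), estar (n + i)}
    (∀ p, dPerp (H p) = ⊥) ∧ (⨅ p, H p) = ⊥ := by
  intro V estar H
  have hestar : ∀ n (v : V), estar n v = v n := fun n v => rfl
  constructor
  · -- part 1
    intro p
    rw [eq_bot_iff]
    intro v hv
    have hv' : ∀ g ∈ H p, g v = 0 := hv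
    have key : ∀ n, (∑ i ∈ Finset.range (p+1), v (n + i)) = 0 := by
      intro n
      have := hv' _ (Submodule.subset_span ⟨n, rfl⟩)
      simpa [hestar] using this
    have step : ∀ n, v n = v (n + (p + 1)) := by
      intro n
      have h1 := key n
      have h2 := key (n+1)
      rw [Finset.sum_range_succ'] at h1
      rw [Finset.sum_range_succ] at h2
      have e1 : (∑ i ∈ Finset.range p, v (n + (i + 1)))
          = ∑ i ∈ Finset.range p, v (n + 1 + i) := by
        apply Finset.sum_congr rfl; intro i _; congr 1; omega
      rw [e1] at h1
      have e2 : v (n + 0) = v (n + 1 + p) := by linear_combination h1 - h2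
      simpa [show n + 1 + p = n + (p + 1) by omega] using e2
    have iter : ∀ m n, v n = v (n + (p + 1) * m) := by
      intro m
      induction m with
      | zero => simp
      | succ m ih =>
        intro n
        rw [ih n, step (n + (p+1)*m)]
        congr 1; ring
    have hz : ∀ n, v n = 0 := by
      intro n
      set N := v.support.sup id + 1 with hN
      rw [iter N n]
      apply Finsupp.notMem_support_iff.mp
      intro hmem
      have h1 := Finset.le_sup (f := id) hmem
      simp only [id] at h1
      have h2 : N ≤ (p + 1) * N := Nat.le_mul_of_pos_left N (by omega)
      omega
    simp only [Submodule.mem_bot]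
    exact Finsupp.ext hz
  · -- part 2
    rw [eq_bot_iff]
    intro g hg
    rw [Submodule.mem_iInf] at hg
    have hmem : ∀ p, ∃ c : ℕ →₀ k,
        (c.sum fun n cn => cn • (∑ i ∈ Finset.range (p + 1), estar (n + i))) = g := by
      intro p
      have h0 : g ∈ Submodule.span k
          {g | ∃ n, g = ∑ i ∈ Finset.range (p + 1), estar (n + i)} := hg p
      rw [show {g | ∃ n, g = ∑ i ∈ Finset.range (p + 1), estar (n + i)}
          = Set.range (fun n => ∑ i ∈ Finset.range (p + 1), estar (n + i)) by
        ext x; simp [Set.mem_range, eq_comm]] at h0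
      exact (Finsupp.mem_span_range_iff_exists_finsupp).mp h0
    have eval : ∀ (p : ℕ) (c : ℕ →₀ k) (m : ℕ),
        (c.sum fun n cn => cn • (∑ i ∈ Finset.range (p + 1), estar (n + i)))
            (Finsupp.single (M := k) m 1)
          = ∑ n ∈ c.support, c n * (if n ≤ m ∧ m ≤ n + p then 1 else 0) := by
      intro p c m
      rw [Finsupp.sum]
      rw [LinearMap.sum_apply]
      apply Finset.sum_congr rfl
      intro n _
      rw [LinearMap.smul_apply, LinearMap.sum_apply]
      have : ∀ i, estar (n + i) (Finsupp.single (M := k) m 1)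
          = if m = n + i then (1:k) else 0 := by
        intro i; rw [hestar]; exact Finsupp.single_apply
      rw [Finset.sum_congr rfl (fun i _ => this i), window_sum]
      simp [smul_eq_mul]
    -- from p = 0 : values of g on singles vanish for large m
    obtain ⟨c0, hc0⟩ := hmem 0
    set N := c0.support.sup id with hNdef
    have hbig : ∀ m, N < m → g (Finsupp.single m 1) = 0 := by
      intro m hm
      rw [← hc0, eval]
      apply Finset.sum_eq_zero
      intro n hn
      have hle : n ≤ N := by
        have := Finset.le_sup (f := id) hn; simpa using this
      rw [if_neg (by omega), mul_zero]
    -- now use p = N + 1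
    obtain ⟨c, hc⟩ := hmem (N + 1)
    simp only [Submodule.mem_bot]
    by_cases hcz : c = 0
    · rw [← hc, hcz]; simp
    · exfalso
      have hsupp : c.support.Nonempty := Finsupp.support_nonempty_iff.mpr hcz
      set M := c.support.max' hsupp with hMdef
      have hMmem : M ∈ c.support := c.support.max'_mem hsupp
      have hzero : g (Finsupp.single (M + (N + 1)) 1) = 0 := hbig _ (by omega)
      rw [← hc, eval] at hzero
      have : (∑ n ∈ c.support, c n * (if n ≤ M + (N+1) ∧ M + (N+1) ≤ n + (N+1) then (1:k) else 0))
          = c M := by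
        rw [Finset.sum_eq_single M]
        · rw [if_pos ⟨by omega, by omega⟩, mul_one]
        · intro n hn hne
          have hle : n ≤ M := Finset.le_max' _ _ hn
          rw [if_neg (by omega), mul_zero]
        · intro h; exact absurd hMmem h
      rw [this] at hzero
      exact Finsupp.mem_support_iff.mp hMmem hzero
end

section
/- Let R be a ring with (R injective as a left module over itself) and F a finitely generated right R-module. Then the evaluation map Φ_F : F → Hom_R-left(Hom_R(F,R), R), Φ_F(m)(f) = f(m), is surjective. -/
/-!
Choose generators `m₁, …, mₙ` of `F`. Evaluation at them embeds `F*` into `Rⁿ` as left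
`R`-modules, so by self-injectivity of `R` every `φ ∈ *(F*)` extends to a left-linear
`ψ : Rⁿ → R`. Such a `ψ` is `x ↦ ∑ xᵢ cᵢ` with `cᵢ = ψ(eᵢ)`, hence
`φ(f) = ∑ f(mᵢ) cᵢ = f(∑ mᵢ cᵢ)`, i.e. `φ = Φ_F(∑ mᵢ cᵢ)`.
-/

/-- The evaluation map `Φ_F : F → *(F*)` for a right `R`-module `F` (right modules are
`Rᵐᵒᵖ`-modules): `F* = Hom_R(F,R)` is a left `R`-module and `Φ_F(m)(f) = f(m)`. -/
def Phi {R : Type*} [Ring R] {F : Type*} [AddCommGroup F] [Module Rᵐᵒᵖ F] (m : F) :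
    (F →ₗ[Rᵐᵒᵖ] R) →ₗ[R] R where
  toFun f := f m
  map_add' f g := rfl
  map_smul' r f := rfl

section EvalAt

variable {R : Type*} [Ring R] {F : Type*} [AddCommGroup F] [Module Rᵐᵒᵖ F] {ι : Type*}

def evalAt (m : ι → F) : (F →ₗ[Rᵐᵒᵖ] R) →ₗ[R] (ι → R) where
  toFun f i := f (m i)
  map_add' _ _ := rfl
  map_smul' _ _ := rfl

theorem evalAt_injective {m : ι → F} (hm : Submodule.span Rᵐᵒᵖ (Set.range m) = ⊤) :
    Function.Injective (evalAt (R := R) m) :=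
  fun _ _ hfg => LinearMap.ext_on_range hm (congrFun hfg)

theorem comp_evalAt_eq_Phi [Fintype ι] [DecidableEq ι] (m : ι → F) (ψ : (ι → R) →ₗ[R] R) :
    ψ ∘ₗ evalAt m = Phi (∑ i, MulOpposite.op (ψ (Pi.single i 1)) • m i) := by
  ext f
  calc ψ (evalAt m f) = ∑ i, f (m i) * ψ (Pi.single i 1) := by
        simp only [LinearMap.pi_apply_eq_sum_univ ψ (evalAt m f), smul_eq_mul,
          ← Pi.single_apply, Pi.single_comm]
        rfl
    _ = f (∑ i, MulOpposite.op (ψ (Pi.single i 1)) • m i) := by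
        simp only [map_sum, LinearMap.map_smul, MulOpposite.smul_eq_mul_unop,
          MulOpposite.unop_op]

end EvalAt

/-- If `R` is left self-injective and `F` is a finitely generated right `R`-module,
then the evaluation map `Φ_F : F → *(F*)` is surjective. -/
theorem stmt10 {R : Type*} [Ring R] (hinj : Module.Injective R R)
    (F : Type*) [AddCommGroup F] [Module Rᵐᵒᵖ F] [Module.Finite Rᵐᵒᵖ F] :
    Function.Surjective (fun m : F => Phi (R := R) m) := by
  intro φ
  obtain ⟨n, m, hm⟩ := Module.Finite.exists_fin (R := Rᵐᵒᵖ) (M := F)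
  obtain ⟨ψ, hψ⟩ :=
    (Module.Baer.of_injective hinj).extension_property _ (evalAt_injective (R := R) hm) φ
  exact ⟨_, (comp_evalAt_eq_Phi m ψ).symm.trans hψ⟩
end

section
/- Let R be a ring such that the orthogonal correspondence on R_R is an equivalence, i.e., (I^⊥)^⊥ = I for every right ideal I ≤ R_R and (X^⊥)^⊥ = X for every left ideal X ≤ _RR (orthogonals taken as annihilators, identifying R* ≅ R). Then R is right and left Kasch: every simple right R-module and every simple left R-module embeds into R. -/
universe u

/-- Left annihilator of a right ideal `I ≤ R_R` (right ideals are `Rᵐᵒᵖ`-submodules of `R`),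
a left ideal of `R`. -/
def lann {R : Type u} [Ring R] (I : Submodule Rᵐᵒᵖ R) : Submodule R R where
  carrier := {x | ∀ r ∈ I, x * r = 0}
  add_mem' := by intro a b ha hb r hr; simp [add_mul, ha r hr, hb r hr]
  zero_mem' := by intro r hr; simp
  smul_mem' := by intro c x hx r hr; simp [smul_eq_mul, mul_assoc, hx r hr]

/-- Right annihilator of a left ideal `X ≤ _RR`, a right ideal of `R`. -/
def rann {R : Type u} [Ring R] (X : Submodule R R) : Submodule Rᵐᵒᵖ R where
  carrier := {r | ∀ x ∈ X, x * r = 0}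
  add_mem' := by intro a b ha hb x hx; simp [mul_add, ha x hx, hb x hx]
  zero_mem' := by intro x hx; simp
  smul_mem' := by
    intro c r hr x hx
    rw [MulOpposite.smul_eq_mul_unop, ← mul_assoc, hr x hx, zero_mul]

lemma rann_bot {R : Type u} [Ring R] : rann (⊥ : Submodule R R) = ⊤ := by
  ext r
  simp only [Submodule.mem_top, iff_true]
  intro x hx
  rw [Submodule.mem_bot] at hx
  simp [rann, hx]

lemma lann_bot {R : Type u} [Ring R] : lann (⊥ : Submodule Rᵐᵒᵖ R) = ⊤ := by
  ext x
  simp only [Submodule.mem_top, iff_true]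
  intro r hr
  rw [Submodule.mem_bot] at hr
  simp [lann, hr]

/-- Left multiplication by `x`, as a map of right `R`-modules. -/
def mulLeftOp {R : Type u} [Ring R] (x : R) : R →ₗ[Rᵐᵒᵖ] R where
  toFun := (x * ·)
  map_add' := mul_add x
  map_smul' := by
    intro c r
    simp [MulOpposite.smul_eq_mul_unop, mul_assoc]

/-- If `R` has `⊥`-equivalence — `(I^⊥)^⊥ = I` for every right ideal `I` and
`(X^⊥)^⊥ = X` for every left ideal `X` — then `R` is right and left Kasch:
every simple right module and every simple left module embeds into `R`. -/
theorem stmt13 {R : Type u} [Ring R]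
    (hR : ∀ I : Submodule Rᵐᵒᵖ R, rann (lann I) = I)
    (hL : ∀ X : Submodule R R, lann (rann X) = X) :
    (∀ (S : Type u) [AddCommGroup S] [Module Rᵐᵒᵖ S] [IsSimpleModule Rᵐᵒᵖ S],
        ∃ g : S →ₗ[Rᵐᵒᵖ] R, Function.Injective g) ∧
    (∀ (S : Type u) [AddCommGroup S] [Module R S] [IsSimpleModule R S],
        ∃ g : S →ₗ[R] R, Function.Injective g) := by
  constructor
  · intro S _ _ _
    haveI : Nontrivial S := IsSimpleModule.nontrivial Rᵐᵒᵖ S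
    obtain ⟨s, hs⟩ := exists_ne (0 : S)
    let φ : R →ₗ[Rᵐᵒᵖ] S :=
      { toFun := fun r => MulOpposite.op r • s
        map_add' := by intro a b; simp [add_smul]
        map_smul' := by
          intro c r
          simp [MulOpposite.smul_eq_mul_unop, mul_smul] }
    have hφ : Function.Surjective φ := by
      have hne : LinearMap.range φ ≠ ⊥ := by
        intro h
        apply hs
        have : φ 1 ∈ (⊥ : Submodule Rᵐᵒᵖ S) := h ▸ LinearMap.mem_range_self φ 1
        simpa [φ] using this
      rw [← LinearMap.range_eq_top]
      exact (eq_bot_or_eq_top (LinearMap.range φ)).resolve_left hne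
    set M : Submodule Rᵐᵒᵖ R := LinearMap.ker φ with hM
    have hcoatom : IsCoatom M := by
      rw [← isSimpleModule_iff_isCoatom]
      exact IsSimpleModule.congr (φ.quotKerEquivOfSurjective hφ)
    have hlann : lann M ≠ ⊥ := by
      intro h
      have h2 := hR M
      rw [h, rann_bot] at h2
      exact hcoatom.1 h2.symm
    obtain ⟨x, hxM, hx0⟩ := Submodule.exists_mem_ne_zero_of_ne_bot hlann
    set ψ := mulLeftOp (R := R) x with hψ
    have hle : M ≤ LinearMap.ker ψ := by
      intro r hr
      simpa [ψ, mulLeftOp] using hxM r hr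
    have hker : M = LinearMap.ker ψ := by
      rcases hle.lt_or_eq with h | h
      · exfalso
        have := hcoatom.2 _ h
        have h1 : ψ 1 = 0 := by
          have : (1 : R) ∈ LinearMap.ker ψ := this ▸ Submodule.mem_top
          simpa using this
        apply hx0
        simpa [ψ, mulLeftOp] using h1
      · exact h
    let g : S →ₗ[Rᵐᵒᵖ] R :=
      (Submodule.liftQ M ψ hle).comp
        ((φ.quotKerEquivOfSurjective hφ).symm : S →ₗ[Rᵐᵒᵖ] R ⧸ M)
    refine ⟨g, ?_⟩
    have hinj : Function.Injective (Submodule.liftQ M ψ hle) := by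
      rw [← LinearMap.ker_eq_bot]
      exact Submodule.ker_liftQ_eq_bot' M ψ hker
    exact hinj.comp (φ.quotKerEquivOfSurjective hφ).symm.injective
  · intro S _ _ _
    haveI : Nontrivial S := IsSimpleModule.nontrivial R S
    obtain ⟨s, hs⟩ := exists_ne (0 : S)
    let φ : R →ₗ[R] S := LinearMap.toSpanSingleton R S s
    have hφ : Function.Surjective φ := by
      have hne : LinearMap.range φ ≠ ⊥ := by
        intro h
        apply hs
        have : φ 1 ∈ (⊥ : Submodule R S) := h ▸ LinearMap.mem_range_self φ 1
        simpa [φ] using this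
      rw [← LinearMap.range_eq_top]
      exact (eq_bot_or_eq_top (LinearMap.range φ)).resolve_left hne
    set M : Submodule R R := LinearMap.ker φ with hM
    have hcoatom : IsCoatom M := by
      rw [← isSimpleModule_iff_isCoatom]
      exact IsSimpleModule.congr (φ.quotKerEquivOfSurjective hφ)
    have hrann : rann M ≠ ⊥ := by
      intro h
      have h2 := hL M
      rw [h, lann_bot] at h2
      exact hcoatom.1 h2.symm
    obtain ⟨x, hxM, hx0⟩ := Submodule.exists_mem_ne_zero_of_ne_bot hrann
    set ψ : R →ₗ[R] R := LinearMap.toSpanSingleton R R x with hψ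
    have hle : M ≤ LinearMap.ker ψ := by
      intro r hr
      have := hxM r hr
      simpa [ψ, LinearMap.toSpanSingleton, smul_eq_mul] using this
    have hker : M = LinearMap.ker ψ := by
      rcases hle.lt_or_eq with h | h
      · exfalso
        have := hcoatom.2 _ h
        have h1 : ψ 1 = 0 := by
          have : (1 : R) ∈ LinearMap.ker ψ := this ▸ Submodule.mem_top
          simpa using this
        apply hx0
        simpa [ψ, LinearMap.toSpanSingleton] using h1
      · exact h
    let g : S →ₗ[R] R :=
      (Submodule.liftQ M ψ hle).comp
        ((φ.quotKerEquivOfSurjective hφ).symm : S →ₗ[R] R ⧸ M)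
    refine ⟨g, ?_⟩
    have hinj : Function.Injective (Submodule.liftQ M ψ hle) := by
      rw [← LinearMap.ker_eq_bot]
      exact Submodule.ker_liftQ_eq_bot' M ψ hker
    exact hinj.comp (φ.quotKerEquivOfSurjective hφ).symm.injective
end

section
/- Let R be a ring and X a right R-module such that every monomorphism i : X → M of right R-modules whose cokernel M/Im(i) is cyclic (generated by one element) splits. Then X is an injective right R-module. -/
/-!
Let `g : N → X` be defined on a submodule `N` of `S = N + yR`. The pushout `X → P` of the
inclusion `N → S` along `g` is injective with cokernel `S / N`, which is cyclic, so it splits;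
the splitting composed with `S → P` extends `g` to `S`. Zorn's lemma, as in the proof of Baer's
criterion, then extends maps into `X` along every injection. Baer's criterion itself does not
apply directly: the pushout along an ideal of `R` lives in the universe of `R`, not of `X`.
-/

universe u v

namespace LinearMap

variable {A : Type*} [Ring A] {N S X : Type*} [AddCommGroup N] [AddCommGroup S] [AddCommGroup X]
  [Module A N] [Module A S] [Module A X] (g : N →ₗ[A] X) (ι : N →ₗ[A] S)

def pushoutRel : Submodule A (X × S) := range (g.prod (-ι))

abbrev Pushout := (X × S) ⧸ pushoutRel g ι

def pushoutInl : X →ₗ[A] Pushout g ι := (pushoutRel g ι).mkQ ∘ₗ inl A X S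

def pushoutInr : S →ₗ[A] Pushout g ι := (pushoutRel g ι).mkQ ∘ₗ inr A X S

theorem pushoutInr_apply_map (n : N) : pushoutInr g ι (ι n) = pushoutInl g ι (g n) := by
  rw [pushoutInr, pushoutInl, comp_apply, comp_apply, ← sub_eq_zero, ← map_sub,
    Submodule.mkQ_apply, Submodule.Quotient.mk_eq_zero]
  exact ⟨-n, by simp⟩

theorem pushoutInl_add_pushoutInr (x : X) (s : S) :
    pushoutInl g ι x + pushoutInr g ι s = (pushoutRel g ι).mkQ (x, s) := by
  simp [pushoutInl, pushoutInr, ← Submodule.Quotient.mk_add]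

theorem pushoutInl_injective (hι : Function.Injective ι) :
    Function.Injective (pushoutInl g ι) := by
  refine (injective_iff_map_eq_zero _).mpr fun x hx => ?_
  obtain ⟨n, hn⟩ : (x, (0 : S)) ∈ pushoutRel g ι := by
    rwa [pushoutInl, comp_apply, Submodule.mkQ_apply, Submodule.Quotient.mk_eq_zero] at hx
  have hn0 : n = 0 := hι (by simpa using congrArg Prod.snd hn)
  simpa [hn0] using (congrArg Prod.fst hn).symm

theorem span_pushoutInr_eq_top {y : S} (hy : range ι ⊔ Submodule.span A {y} = ⊤) :
    Submodule.span A {(range (pushoutInl g ι)).mkQ (pushoutInr g ι y)} = ⊤ := by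
  refine Submodule.eq_top_iff'.mpr fun z => ?_
  obtain ⟨w, rfl⟩ := Submodule.mkQ_surjective _ z
  obtain ⟨⟨x, s⟩, rfl⟩ := Submodule.mkQ_surjective _ w
  obtain ⟨_, ⟨n, rfl⟩, _, hr, rfl⟩ := Submodule.mem_sup.mp (hy ▸ Submodule.mem_top : s ∈ _)
  obtain ⟨r, rfl⟩ := Submodule.mem_span_singleton.mp hr
  have hinl (x : X) : (range (pushoutInl g ι)).mkQ (pushoutInl g ι x) = 0 :=
    (Submodule.Quotient.mk_eq_zero _).mpr (mem_range_self _ x)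
  rw [← pushoutInl_add_pushoutInr, map_add, map_add, pushoutInr_apply_map, map_smul, map_add,
    hinl, hinl, zero_add, zero_add, map_smul]
  exact Submodule.smul_mem _ r (Submodule.mem_span_singleton_self _)
end LinearMap

theorem LinearMap.exists_extension_of_cyclic_cokernel {A : Type*} [Ring A] {X : Type v}
    [AddCommGroup X] [Module A X]
    (h : ∀ (M : Type v) [AddCommGroup M] [Module A M] (i : X →ₗ[A] M),
      Function.Injective i →
      (∃ m : M ⧸ LinearMap.range i, Submodule.span A {m} = ⊤) →
      ∃ p : M →ₗ[A] X, p ∘ₗ i = LinearMap.id)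
    {N : Type*} {S : Type v} [AddCommGroup N] [AddCommGroup S] [Module A N] [Module A S]
    {ι : N →ₗ[A] S} (hι : Function.Injective ι) {y : S}
    (hy : range ι ⊔ Submodule.span A {y} = ⊤) (g : N →ₗ[A] X) :
    ∃ g' : S →ₗ[A] X, g' ∘ₗ ι = g := by
  obtain ⟨p, hp⟩ := h _ (pushoutInl g ι) (pushoutInl_injective g ι hι)
    ⟨_, span_pushoutInr_eq_top g ι hy⟩
  refine ⟨p ∘ₗ pushoutInr g ι, LinearMap.ext fun n => ?_⟩
  rw [comp_apply, comp_apply, pushoutInr_apply_map]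
  exact LinearMap.congr_fun hp (g n)

theorem Submodule.range_inclusion_sup_span_eq_top {A B : Type*} [Ring A] [AddCommGroup B]
    [Module A B] (N : Submodule A B) (y : B) :
    LinearMap.range (inclusion (le_sup_left : N ≤ N ⊔ span A {y})) ⊔
      span A {⟨y, mem_sup_right (mem_span_singleton_self y)⟩} = ⊤ := by
  refine eq_top_iff'.mpr fun ⟨s, hs⟩ => ?_
  obtain ⟨n, hn, _, hr, rfl⟩ := mem_sup.mp hs
  obtain ⟨r, rfl⟩ := mem_span_singleton.mp hr
  exact mem_sup.mpr ⟨_, ⟨⟨n, hn⟩, rfl⟩, _, smul_mem _ r (mem_span_singleton_self _), rfl⟩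

namespace Module.Baer

variable {A : Type*} [Ring A] {Q : Type*} [AddCommGroup Q] [Module A Q]
  {M N : Type*} [AddCommGroup M] [AddCommGroup N] [Module A M] [Module A N]

theorem extensionOfMax_domain_eq_top_of_forall_extend
    (hQ : ∀ (P : Submodule A N) (g : P →ₗ[A] Q) (y : N),
      ∃ g' : ↥(P ⊔ Submodule.span A {y}) →ₗ[A] Q, g' ∘ₗ Submodule.inclusion le_sup_left = g)
    (i : M →ₗ[A] N) [Fact (Function.Injective i)] (f : M →ₗ[A] Q) :
    (extensionOfMax i f).domain = ⊤ := by
  set E := extensionOfMax i f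
  refine Submodule.eq_top_iff'.mpr fun y => ?_
  obtain ⟨g', hg'⟩ := hQ E.domain E.toFun y
  let E' : ExtensionOf i f :=
    { domain := E.domain ⊔ Submodule.span A {y}
      toFun := g'
      le := E.le.trans le_sup_left
      is_extension := fun m => (E.is_extension m).trans (LinearMap.congr_fun hg' _).symm }
  have hE : E ≤ E' := ⟨le_sup_left, fun x x' hxx' => by
    rw [show x' = Submodule.inclusion le_sup_left x from Subtype.ext hxx'.symm]
    exact (LinearMap.congr_fun hg' x).symm⟩
  have hmax : E' = E := extensionOfMax_is_max i f E' hE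
  rw [← hmax]
  exact Submodule.mem_sup_right (Submodule.mem_span_singleton_self y)

end Module.Baer

theorem Module.injective_of_forall_extend_sup_span {A : Type*} [Ring A] {Q : Type v}
    [AddCommGroup Q] [Module A Q]
    (hQ : ∀ {N : Type v} [AddCommGroup N] [Module A N] (P : Submodule A N) (g : P →ₗ[A] Q)
      (y : N),
      ∃ g' : ↥(P ⊔ Submodule.span A {y}) →ₗ[A] Q, g' ∘ₗ Submodule.inclusion le_sup_left = g) :
    Module.Injective A Q := by
  refine ⟨fun M N _ _ _ _ i hi f => ?_⟩
  have : Fact (Function.Injective i) := ⟨hi⟩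
  let E := Module.Baer.extensionOfMax i f
  have htop : E.domain = ⊤ := Module.Baer.extensionOfMax_domain_eq_top_of_forall_extend hQ i f
  exact ⟨E.toFun ∘ₗ (LinearEquiv.ofTop _ htop).symm.toLinearMap, fun m => (E.is_extension m).symm⟩

/-- If every monomorphism `i : X → M` of right `R`-modules (as `Rᵐᵒᵖ`-modules) whose
cokernel `M/Im i` is cyclic splits, then `X` is injective. -/
theorem stmt15 {R : Type u} [Ring R] (X : Type v) [AddCommGroup X] [Module Rᵐᵒᵖ X]
    (h : ∀ (M : Type v) [AddCommGroup M] [Module Rᵐᵒᵖ M] (i : X →ₗ[Rᵐᵒᵖ] M),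
      Function.Injective i →
      (∃ m : M ⧸ LinearMap.range i, Submodule.span Rᵐᵒᵖ {m} = ⊤) →
      ∃ p : M →ₗ[Rᵐᵒᵖ] X, p ∘ₗ i = LinearMap.id) :
    Module.Injective Rᵐᵒᵖ X :=
  Module.injective_of_forall_extend_sup_span fun P g y =>
    LinearMap.exists_extension_of_cyclic_cokernel h (Submodule.inclusion_injective le_sup_left)
      (Submodule.range_inclusion_sup_span_eq_top P y) g
end

section
/- Let R be a ring with ⊥-equivalence (i.e., (I^⊥)^⊥ = I for all right ideals I and (X^⊥)^⊥ = X for all left ideals X, using annihilator orthogonals). If j : R → X is a monomorphism of right R-modules and X is R-cogenerated (X embeds into some power R^I), then j splits. -/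
universe u v

/-- If `R` has `⊥`-equivalence (double annihilators recover all right and left ideals),
`j : R → X` is a monomorphism of right `R`-modules, and `X` is `R`-cogenerated,
then `j` splits. -/
theorem stmt16 {R : Type u} [Ring R]
    (hR : ∀ I : Submodule Rᵐᵒᵖ R, rann (lann I) = I)
    (hL : ∀ X : Submodule R R, lann (rann X) = X)
    (X : Type v) [AddCommGroup X] [Module Rᵐᵒᵖ X]
    (j : R →ₗ[Rᵐᵒᵖ] X) (hj : Function.Injective j)
    (hcog : ∃ (I : Type v) (g : X →ₗ[Rᵐᵒᵖ] (I → R)), Function.Injective g) :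
    ∃ p : X →ₗ[Rᵐᵒᵖ] R, p ∘ₗ j = LinearMap.id := by
  obtain ⟨I, g, hg⟩ := hcog
  set a : I → R := fun i => g (j 1) i with ha
  have key : ∀ r : R, ∀ i : I, g (j r) i = a i * r := by
    intro r i
    have h1 : j r = (MulOpposite.op r) • j 1 := by
      rw [← j.map_smul]
      congr 1
      simp [MulOpposite.smul_eq_mul_unop]
    rw [h1, g.map_smul]
    simp [ha, MulOpposite.smul_eq_mul_unop]
  have hspan : (1 : R) ∈ Submodule.span R (Set.range a) := by
    have htop : Submodule.span R (Set.range a) = ⊤ := by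
      have hr0 : rann (Submodule.span R (Set.range a)) = ⊥ := by
        have : ∀ r : R, (∀ x ∈ Submodule.span R (Set.range a), x * r = 0) ↔ r = 0 := by
          intro r
          constructor
          · intro hr
            apply hj; apply hg
            have h0 : j (0:R) = 0 := j.map_zero
            funext i
            have := hr (a i) (Submodule.subset_span ⟨i, rfl⟩)
            simp [key, this, g.map_zero, h0]
          · rintro rfl x hx; simp
        ext r
        exact (this r).trans (Submodule.mem_bot Rᵐᵒᵖ).symm
      rw [← hL (Submodule.span R (Set.range a)), hr0]
      ext x
      constructor
      · intro _; trivial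
      · intro _
        intro r hr
        have : r = 0 := (Submodule.mem_bot Rᵐᵒᵖ).mp hr
        simp [this]
    rw [htop]; trivial
  obtain ⟨c, hc⟩ := Finsupp.mem_span_range_iff_exists_finsupp.mp hspan
  refine ⟨{ toFun := fun x => ∑ i ∈ c.support, c i * g x i
            map_add' := ?_
            map_smul' := ?_ }, ?_⟩
  · intro x y
    simp [mul_add, Finset.sum_add_distrib]
  · intro r x
    simp only [g.map_smul, Pi.smul_apply, MulOpposite.smul_eq_mul_unop, RingHom.id_apply]
    rw [Finset.sum_mul]
    simp [mul_assoc]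
  · apply LinearMap.ext
    intro r
    simp only [LinearMap.comp_apply, LinearMap.coe_mk, AddHom.coe_mk, LinearMap.id_apply]
    have : ∑ i ∈ c.support, c i * g (j r) i = (∑ i ∈ c.support, c i * a i) * r := by
      rw [Finset.sum_mul]
      simp [key, mul_assoc]
    rw [this]
    have hc' : ∑ i ∈ c.support, c i * a i = 1 := by
      rw [← hc]; rfl
    rw [hc', one_mul]
end
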